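/- arXiv:2107.01916 — 2 statements merged into one kernel-verified Lean document; each statement's English description precedes it below -/
import Mathlib

section
/- Non-identifiability of the SNSS.sjd functional (Proposition 3(1), necessity). Let p ≥ 2, let A be an invertible real p×p matrix, let Λ₀ be a diagonal p×p matrix with strictly positive diagonal entries, and let Λ_{k,l} be diagonal p×p matrices for k = 1,…,K and l = 1,…,L. Assume there exist indices i ≠ j such that (Λ_{k,l})ᵢᵢ/(Λ₀)ᵢᵢ = (Λ_{k,l})ⱼⱼ/(Λ₀)ⱼⱼ for all k and l. Set M₀ = A Λ₀ Aᵀ and M_{k,l} = A Λ_{k,l} Aᵀ. Then there exists an orthogonal p×p matrix U such that U M₀^{-1/2} M_{k,l} M₀^{-1/2} Uᵀ is diagonal for all k and l, but U M₀^{-1/2} A is not a generalized permutation matrix. -/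
open Matrix

/-- A signed permutation matrix: exactly one nonzero entry in each row and each
column, each such entry being `1` or `-1`. -/
def IsSignedPerm {p : ℕ} (Q : Matrix (Fin p) (Fin p) ℝ) : Prop :=
  (∀ i, ∃! j, Q i j ≠ 0) ∧ (∀ j, ∃! i, Q i j ≠ 0) ∧
  (∀ i j, Q i j ≠ 0 → Q i j = 1 ∨ Q i j = -1)

/-- A generalized permutation matrix: exactly one nonzero entry in each row and
each column. -/
def IsGenPerm {p : ℕ} (Q : Matrix (Fin p) (Fin p) ℝ) : Prop :=
  (∀ i, ∃! j, Q i j ≠ 0) ∧ (∀ j, ∃! i, Q i j ≠ 0)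

open scoped Classical in
/-- For a symmetric positive (semi)definite matrix `M`, `invSqrt M` is the inverse
of its unique positive semidefinite square root, i.e. `M^{-1/2}`. -/
noncomputable def invSqrt {p : ℕ} (M : Matrix (Fin p) (Fin p) ℝ) : Matrix (Fin p) (Fin p) ℝ :=
  if h : M.PosSemidef then (h.1.eigenvectorUnitary.1 * diagonal (Real.sqrt ∘ h.1.eigenvalues) *
    (star h.1.eigenvectorUnitary : Matrix (Fin p) (Fin p) ℝ))⁻¹ else 0

/-- Non-identifiability of the SNSS.sjd functional (necessity). -/
theorem snss_sjd_not_identifiable {p K L : ℕ} (hp : 2 ≤ p)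
    (A Λ₀ : Matrix (Fin p) (Fin p) ℝ)
    (Λ : Fin K → Fin L → Matrix (Fin p) (Fin p) ℝ)
    (hA : IsUnit A)
    (hΛ₀ : Λ₀.IsDiag) (hΛ₀pos : ∀ i, 0 < Λ₀ i i)
    (hΛ : ∀ k l, (Λ k l).IsDiag)
    (htie : ∃ i j : Fin p, i ≠ j ∧ ∀ k l, Λ k l i i / Λ₀ i i = Λ k l j j / Λ₀ j j) :
    ∃ U : Matrix (Fin p) (Fin p) ℝ, U * Uᵀ = 1 ∧
      (∀ k l, (U * invSqrt (A * Λ₀ * Aᵀ) * (A * Λ k l * Aᵀ) *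
        invSqrt (A * Λ₀ * Aᵀ) * Uᵀ).IsDiag) ∧
      ¬ IsGenPerm (U * invSqrt (A * Λ₀ * Aᵀ) * A) := by
  classical
  obtain ⟨i, j, hij, hties⟩ := htie
  have hlam : ∀ x, 0 < Λ₀ x x := hΛ₀pos
  have hΛ₀d : Λ₀ = Matrix.diagonal (fun x => Λ₀ x x) := hΛ₀.diagonal_diag.symm
  have hM₀psd : (A * Λ₀ * Aᵀ).PosSemidef := by
    have h1 : (Matrix.diagonal (fun x => Λ₀ x x)).PosSemidef :=
      Matrix.posSemidef_diagonal_iff.mpr fun x => (hlam x).le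
    have h2 := h1.mul_mul_conjTranspose_same A
    rwa [Matrix.conjTranspose_eq_transpose_of_trivial, ← hΛ₀d] at h2
  set S := hM₀psd.1.eigenvectorUnitary.1 * diagonal (Real.sqrt ∘ hM₀psd.1.eigenvalues) *
    (star hM₀psd.1.eigenvectorUnitary : Matrix (Fin p) (Fin p) ℝ) with hSdef
  have hinv : invSqrt (A * Λ₀ * Aᵀ) = S⁻¹ := by
    unfold invSqrt
    rw [dif_pos hM₀psd]
  have hSS : S * S = A * Λ₀ * Aᵀ := by
    have hU : (star hM₀psd.1.eigenvectorUnitary : Matrix (Fin p) (Fin p) ℝ) *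
        hM₀psd.1.eigenvectorUnitary.1 = 1 := by
      exact Unitary.star_mul_self_of_mem hM₀psd.1.eigenvectorUnitary.2
    have hD : diagonal (Real.sqrt ∘ hM₀psd.1.eigenvalues) * diagonal (Real.sqrt ∘ hM₀psd.1.eigenvalues)
        = diagonal (RCLike.ofReal ∘ hM₀psd.1.eigenvalues) := by
      rw [diagonal_mul_diagonal]
      refine congrArg diagonal (funext fun x => ?_)
      simp [Real.mul_self_sqrt (hM₀psd.eigenvalues_nonneg x)]
    have hspec := hM₀psd.1.spectral_theorem
    rw [Unitary.conjStarAlgAut_apply] at hspec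
    refine Eq.trans ?_ hspec.symm
    rw [hSdef, ← hD]
    have aux : ∀ U D : Matrix (Fin p) (Fin p) ℝ, star U * U = 1 →
        U * D * star U * (U * D * star U) = U * (D * D) * star U := by
      intro U D hU'
      simp only [Matrix.mul_assoc]
      rw [← Matrix.mul_assoc (star U) U, hU', Matrix.one_mul]
    exact aux _ _ hU
  have hST : Sᵀ = S := by
    rw [hSdef]
    simp [Matrix.transpose_mul, Matrix.star_eq_conjTranspose, Matrix.mul_assoc]
  have hdetA : A.det ≠ 0 := IsUnit.ne_zero ((Matrix.isUnit_iff_isUnit_det A).mp hA)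
  have hdetAT : Aᵀ.det ≠ 0 := by rwa [Matrix.det_transpose]
  have hdetΛ : Λ₀.det ≠ 0 := by
    rw [hΛ₀d, Matrix.det_diagonal]
    exact (Finset.prod_pos fun x _ => hlam x).ne'
  have hdetS : S.det ≠ 0 := by
    have h1 : S.det * S.det = A.det * Λ₀.det * Aᵀ.det := by
      rw [← Matrix.det_mul, hSS, Matrix.det_mul, Matrix.det_mul]
    intro h
    rw [h, mul_zero] at h1
    exact mul_ne_zero (mul_ne_zero hdetA hdetΛ) hdetAT h1.symm
  have hSinvT : (S⁻¹)ᵀ = S⁻¹ := by rw [Matrix.transpose_nonsing_inv, hST]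
  have hΛinv : Λ₀⁻¹ = Matrix.diagonal (fun x => (Λ₀ x x)⁻¹) := by
    apply Matrix.inv_eq_right_inv
    ext a b
    rw [Matrix.mul_diagonal, Matrix.one_apply]
    rcases eq_or_ne a b with h | h
    · rw [if_pos h, h, mul_inv_cancel₀ (hlam b).ne']
    · rw [if_neg h, hΛ₀ h, zero_mul]
  have hkey0 : Aᵀ * (S⁻¹ * (S⁻¹ * A)) = Matrix.diagonal (fun x => (Λ₀ x x)⁻¹) := by
    have h1 : S⁻¹ * S⁻¹ = (A * Λ₀ * Aᵀ)⁻¹ := by rw [← Matrix.mul_inv_rev, hSS]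
    have h2 : S⁻¹ * (S⁻¹ * A) = (Aᵀ)⁻¹ * (Λ₀⁻¹ * (A⁻¹ * A)) := by
      rw [← Matrix.mul_assoc, h1, Matrix.mul_inv_rev, Matrix.mul_inv_rev]
      simp only [Matrix.mul_assoc]
    rw [h2, Matrix.nonsing_inv_mul A (Ne.isUnit hdetA), Matrix.mul_one, ← Matrix.mul_assoc,
      Matrix.mul_nonsing_inv Aᵀ (Ne.isUnit hdetAT), Matrix.one_mul, hΛinv]
  have hkey : ∀ X : Matrix (Fin p) (Fin p) ℝ,
      Aᵀ * (S⁻¹ * (S⁻¹ * (A * X))) = Matrix.diagonal (fun x => (Λ₀ x x)⁻¹) * X := by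
    intro X
    have h : Aᵀ * (S⁻¹ * (S⁻¹ * (A * X))) = (Aᵀ * (S⁻¹ * (S⁻¹ * A))) * X := by
      simp only [Matrix.mul_assoc]
    rw [h, hkey0]
  set c : ℝ := (Real.sqrt 2)⁻¹ with hcdef
  have hc0 : c ≠ 0 := inv_ne_zero (Real.sqrt_pos.mpr (by norm_num)).ne'
  have hcc : c * c = 2⁻¹ := by
    rw [hcdef, ← mul_inv, Real.mul_self_sqrt (by norm_num)]
  set R : Matrix (Fin p) (Fin p) ℝ := Matrix.of fun a b =>
    if a = i then (if b = i then c else if b = j then c else 0)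
    else if a = j then (if b = i then -c else if b = j then c else 0)
    else if b = a then 1 else 0 with hRdef
  have hrowi : ∀ x, R i x = (if x = i then c else 0) + (if x = j then c else 0) := by
    intro x
    rcases eq_or_ne x i with h | h <;> rcases eq_or_ne x j with h2 | h2
    · exact absurd (h.symm.trans h2) hij
    all_goals simp [hRdef, h, h2, hij, Ne.symm hij]
  have hrowj : ∀ x, R j x = (if x = i then -c else 0) + (if x = j then c else 0) := by
    intro x
    rcases eq_or_ne x i with h | h <;> rcases eq_or_ne x j with h2 | h2
    · exact absurd (h.symm.trans h2) hij
    all_goals simp [hRdef, h, h2, hij, Ne.symm hij]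
  have hrowo : ∀ a, a ≠ i → a ≠ j → ∀ x, R a x = if x = a then 1 else 0 := by
    intro a ha1 ha2 x
    simp [hRdef, ha1, ha2]
  have hsum : ∀ u v u' v' : ℝ, (∑ x, ((if x = i then u else 0) + (if x = j then v else 0)) *
      ((if x = i then u' else 0) + (if x = j then v' else 0))) = u * u' + v * v' := by
    intro u v u' v'
    have key : ∀ x : Fin p, ((if x = i then u else 0) + (if x = j then v else 0)) *
        ((if x = i then u' else 0) + (if x = j then v' else 0)) =
        (if x = i then u * u' else 0) + (if x = j then v * v' else 0) := by
      intro x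
      rcases eq_or_ne x i with h | h <;> rcases eq_or_ne x j with h2 | h2
      · exact absurd (h.symm.trans h2) hij
      all_goals simp [h, h2, hij, Ne.symm hij]
    rw [Finset.sum_congr rfl fun x _ => key x, Finset.sum_add_distrib]
    simp [Finset.sum_ite_eq']
  have hRRT : R * Rᵀ = 1 := by
    ext a b
    rw [Matrix.mul_apply, Matrix.one_apply]
    simp only [Matrix.transpose_apply]
    rcases eq_or_ne a i with hai | hai
    · rcases eq_or_ne b i with hbi | hbi
      · rw [hai, hbi, show (∑ x, R i x * R i x) = c * c + c * c from by
          simp only [hrowi]; exact hsum c c c c, hcc, if_pos rfl]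
        norm_num
      · rcases eq_or_ne b j with hbj | hbj
        · rw [hai, hbj, show (∑ x, R i x * R j x) = c * (-c) + c * c from by
            simp only [hrowi, hrowj]; exact hsum c c (-c) c, if_neg hij]
          ring
        · have hz : (∑ x, R i x * R b x) = 0 := Finset.sum_eq_zero fun x _ => by
            rw [hrowi x, hrowo b hbi hbj x]
            rcases eq_or_ne x b with h | h
            · simp [h, hbi, hbj]
            · simp [h]
          rw [hai, hz, if_neg (Ne.symm hbi)]
    · rcases eq_or_ne a j with haj | haj
      · rcases eq_or_ne b i with hbi | hbi
        · rw [haj, hbi, show (∑ x, R j x * R i x) = (-c) * c + c * c from by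
            simp only [hrowi, hrowj]; exact hsum (-c) c c c, if_neg (Ne.symm hij)]
          ring
        · rcases eq_or_ne b j with hbj | hbj
          · rw [haj, hbj, show (∑ x, R j x * R j x) = (-c) * (-c) + c * c from by
              simp only [hrowj]; exact hsum (-c) c (-c) c, if_pos rfl, neg_mul_neg, hcc]
            norm_num
          · have hz : (∑ x, R j x * R b x) = 0 := Finset.sum_eq_zero fun x _ => by
              rw [hrowj x, hrowo b hbi hbj x]
              rcases eq_or_ne x b with h | h
              · simp [h, hbi, hbj]
              · simp [h]
            rw [haj, hz, if_neg (Ne.symm hbj)]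
      · have hs : (∑ x, R a x * R b x) = R b a := by
          simp only [hrowo a hai haj, ite_mul, one_mul, zero_mul]
          simp [Finset.sum_ite_eq']
        rw [hs]
        rcases eq_or_ne b i with hbi | hbi
        · rw [hbi, hrowi a]
          simp [hai, haj]
        · rcases eq_or_ne b j with hbj | hbj
          · rw [hbj, hrowj a]
            simp [hai, haj]
          · rw [hrowo b hbi hbj a]
  -- the diagonal square root of Λ₀
  set E : Matrix (Fin p) (Fin p) ℝ := Matrix.diagonal (fun x => Real.sqrt (Λ₀ x x)) with hEdef
  have hsqrt : ∀ x, Real.sqrt (Λ₀ x x) * Real.sqrt (Λ₀ x x) = Λ₀ x x :=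
    fun x => Real.mul_self_sqrt (hlam x).le
  have hED1 : E * (Matrix.diagonal (fun x => (Λ₀ x x)⁻¹) * E) = 1 := by
    rw [hEdef, Matrix.diagonal_mul_diagonal, Matrix.diagonal_mul_diagonal, ← Matrix.diagonal_one]
    refine congrArg Matrix.diagonal (funext fun x => ?_)
    rw [show Real.sqrt (Λ₀ x x) * ((Λ₀ x x)⁻¹ * Real.sqrt (Λ₀ x x)) =
      (Real.sqrt (Λ₀ x x) * Real.sqrt (Λ₀ x x)) * (Λ₀ x x)⁻¹ from by ring, hsqrt x,
      mul_inv_cancel₀ (hlam x).ne']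
  have hUT : (R * (E * (Aᵀ * S⁻¹)))ᵀ = S⁻¹ * (A * (E * Rᵀ)) := by
    rw [hEdef]
    simp only [Matrix.transpose_mul, Matrix.transpose_transpose, Matrix.diagonal_transpose,
      hSinvT, Matrix.mul_assoc]
  refine ⟨R * (E * (Aᵀ * S⁻¹)), ?_, ?_, ?_⟩
  · rw [hUT]
    calc R * (E * (Aᵀ * S⁻¹)) * (S⁻¹ * (A * (E * Rᵀ)))
        = R * (E * (Aᵀ * (S⁻¹ * (S⁻¹ * (A * (E * Rᵀ)))))) := by simp only [Matrix.mul_assoc]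
      _ = R * (E * (Matrix.diagonal (fun x => (Λ₀ x x)⁻¹) * (E * Rᵀ))) := by rw [hkey]
      _ = R * ((E * (Matrix.diagonal (fun x => (Λ₀ x x)⁻¹) * E)) * Rᵀ) := by
          simp only [Matrix.mul_assoc]
      _ = R * Rᵀ := by rw [hED1, Matrix.one_mul]
      _ = 1 := hRRT
  · intro k l
    rw [hinv, hUT]
    have hΛd : Λ k l = Matrix.diagonal (fun x => Λ k l x x) := (hΛ k l).diagonal_diag.symm
    have hdiag : E * (Matrix.diagonal (fun x => (Λ₀ x x)⁻¹) *
        (Λ k l * (Matrix.diagonal (fun x => (Λ₀ x x)⁻¹) * E))) =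
        Matrix.diagonal (fun x => Λ k l x x / Λ₀ x x) := by
      rw [hΛd, hEdef]
      simp only [Matrix.diagonal_mul_diagonal]
      refine congrArg Matrix.diagonal (funext fun x => ?_)
      rw [show Real.sqrt (Λ₀ x x) * ((Λ₀ x x)⁻¹ * (Λ k l x x * ((Λ₀ x x)⁻¹ * Real.sqrt (Λ₀ x x))))
          = Λ k l x x * (Λ₀ x x)⁻¹ * ((Λ₀ x x)⁻¹ * (Real.sqrt (Λ₀ x x) * Real.sqrt (Λ₀ x x)))
          from by ring, hsqrt x, inv_mul_cancel₀ (hlam x).ne', mul_one, div_eq_mul_inv,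
          Matrix.diagonal_apply_eq]
    have hdij : Λ k l i i / Λ₀ i i = Λ k l j j / Λ₀ j j := hties k l
    have hcomm : R * Matrix.diagonal (fun x => Λ k l x x / Λ₀ x x) =
        Matrix.diagonal (fun x => Λ k l x x / Λ₀ x x) * R := by
      ext a b
      rw [Matrix.mul_diagonal, Matrix.diagonal_mul]
      rcases eq_or_ne a i with hai | hai
      · rw [hai, hrowi b]
        rcases eq_or_ne b i with hbi | hbi
        · rw [hbi]
          have h : (if i = i then c else 0) + (if i = j then c else 0) = c := by simp [hij]
          rw [h]; ring
        · rcases eq_or_ne b j with hbj | hbj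
          · rw [hbj]
            have h : (if j = i then c else 0) + (if j = j then c else 0) = c := by
              simp [Ne.symm hij]
            rw [h, hdij]; ring
          · have h : (if b = i then c else 0) + (if b = j then c else 0) = 0 := by
              simp [hbi, hbj]
            rw [h]; ring
      · rcases eq_or_ne a j with haj | haj
        · rw [haj, hrowj b]
          rcases eq_or_ne b i with hbi | hbi
          · rw [hbi]
            have h : (if i = i then -c else 0) + (if i = j then c else 0) = -c := by simp [hij]
            rw [h, hdij]; ring
          · rcases eq_or_ne b j with hbj | hbj
            · rw [hbj]
              have h : (if j = i then -c else 0) + (if j = j then c else 0) = c := by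
                simp [Ne.symm hij]
              rw [h]; ring
            · have h : (if b = i then -c else 0) + (if b = j then c else 0) = 0 := by
                simp [hbi, hbj]
              rw [h]; ring
        · rw [hrowo a hai haj b]
          rcases eq_or_ne b a with hba | hba
          · rw [if_pos hba, hba]; ring
          · rw [if_neg hba]; ring
    have hexp : R * (E * (Aᵀ * S⁻¹)) * S⁻¹ * (A * Λ k l * Aᵀ) * S⁻¹ * (S⁻¹ * (A * (E * Rᵀ))) =
        Matrix.diagonal (fun x => Λ k l x x / Λ₀ x x) := by
      calc R * (E * (Aᵀ * S⁻¹)) * S⁻¹ * (A * Λ k l * Aᵀ) * S⁻¹ * (S⁻¹ * (A * (E * Rᵀ)))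
          = R * (E * (Aᵀ * (S⁻¹ * (S⁻¹ * (A * (Λ k l *
              (Aᵀ * (S⁻¹ * (S⁻¹ * (A * (E * Rᵀ))))))))))) := by simp only [Matrix.mul_assoc]
        _ = R * (E * (Matrix.diagonal (fun x => (Λ₀ x x)⁻¹) * (Λ k l *
              (Matrix.diagonal (fun x => (Λ₀ x x)⁻¹) * (E * Rᵀ))))) := by rw [hkey, hkey]
        _ = R * ((E * (Matrix.diagonal (fun x => (Λ₀ x x)⁻¹) * (Λ k l *
              (Matrix.diagonal (fun x => (Λ₀ x x)⁻¹) * E)))) * Rᵀ) := by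
            simp only [Matrix.mul_assoc]
        _ = R * (Matrix.diagonal (fun x => Λ k l x x / Λ₀ x x) * Rᵀ) := by rw [hdiag]
        _ = Matrix.diagonal (fun x => Λ k l x x / Λ₀ x x) * (R * Rᵀ) := by
            rw [← Matrix.mul_assoc, hcomm, Matrix.mul_assoc]
        _ = Matrix.diagonal (fun x => Λ k l x x / Λ₀ x x) := by rw [hRRT, Matrix.mul_one]
    rw [hexp]
    exact Matrix.isDiag_diagonal _
  · rw [hinv]
    have hQ : R * (E * (Aᵀ * S⁻¹)) * S⁻¹ * A =
        R * Matrix.diagonal (fun x => Real.sqrt (Λ₀ x x) * (Λ₀ x x)⁻¹) := by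
      calc R * (E * (Aᵀ * S⁻¹)) * S⁻¹ * A
          = R * (E * (Aᵀ * (S⁻¹ * (S⁻¹ * A)))) := by simp only [Matrix.mul_assoc]
        _ = R * (E * Matrix.diagonal (fun x => (Λ₀ x x)⁻¹)) := by rw [hkey0]
        _ = _ := by rw [hEdef, Matrix.diagonal_mul_diagonal]
    rw [hQ]
    rintro ⟨h1, -⟩
    obtain ⟨b, -, hbu⟩ := h1 i
    have hg : ∀ x, Real.sqrt (Λ₀ x x) * (Λ₀ x x)⁻¹ ≠ 0 := fun x =>
      mul_ne_zero (Real.sqrt_pos.mpr (hlam x)).ne' (inv_ne_zero (hlam x).ne')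
    have hQii : (R * Matrix.diagonal (fun x => Real.sqrt (Λ₀ x x) * (Λ₀ x x)⁻¹)) i i ≠ 0 := by
      rw [Matrix.mul_diagonal, hrowi i]
      have h : (if i = i then c else 0) + (if i = j then c else 0) = c := by simp [hij]
      rw [h]
      exact mul_ne_zero hc0 (hg i)
    have hQij : (R * Matrix.diagonal (fun x => Real.sqrt (Λ₀ x x) * (Λ₀ x x)⁻¹)) i j ≠ 0 := by
      rw [Matrix.mul_diagonal, hrowi j]
      have h : (if j = i then c else 0) + (if j = j then c else 0) = c := by simp [Ne.symm hij]
      rw [h]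
      exact mul_ne_zero hc0 (hg j)
    exact hij ((hbu i hQii).trans (hbu j hQij).symm)
end

section
/- Uniqueness of the simultaneous diagonalizer up to signed permutation. Let p ≥ 1, let A be an invertible real p×p matrix, let D₁ be a diagonal p×p matrix with strictly positive diagonal entries, let D₂ be a diagonal p×p matrix, and assume the p ratios (D₂)ᵢᵢ/(D₁)ᵢᵢ are pairwise distinct. Set M₁ = A D₁ Aᵀ and M₂ = A D₂ Aᵀ. If W and W' are real p×p matrices each satisfying W M₁ Wᵀ = I with W M₂ Wᵀ diagonal, and W' M₁ W'ᵀ = I with W' M₂ W'ᵀ diagonal, then there exists a signed permutation matrix Q such that W' = Q W. -/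
open Matrix

section Aux
open Finset

lemma inj_of_prod_eq {p : ℕ} (f g : Fin p → ℝ)
    (h : ∀ x : ℝ, ∏ k, (f k - x) = ∏ k, (g k - x))
    (hg : Function.Injective g) : Function.Injective f := by
  have hex : ∀ i, ∃ k, g k = f i := by
    intro i
    have h0 : ∏ k, (g k - f i) = 0 := by
      rw [← h]; exact Finset.prod_eq_zero (Finset.mem_univ i) (by ring)
    obtain ⟨k, -, hk⟩ := Finset.prod_eq_zero_iff.mp h0
    exact ⟨k, by linarith [sub_eq_zero.mp hk]⟩
  have hex' : ∀ k, ∃ i, f i = g k := by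
    intro k
    have h0 : ∏ j, (f j - g k) = 0 := by
      rw [h]; exact Finset.prod_eq_zero (Finset.mem_univ k) (by ring)
    obtain ⟨i, -, hi⟩ := Finset.prod_eq_zero_iff.mp h0
    exact ⟨i, sub_eq_zero.mp hi⟩
  choose F hF using hex
  choose G hG using hex'
  have hFsurj : Function.Surjective F := fun k => ⟨G k, hg (by rw [hF, hG])⟩
  have hFinj : Function.Injective F := Finite.injective_iff_surjective.mpr hFsurj
  intro i j hij
  exact hFinj (hg (by rw [hF, hF, hij]))

lemma prod_diag_eq_of_sim {p : ℕ} (B Λ : Matrix (Fin p) (Fin p) ℝ) (r : Fin p → ℝ)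
    (hB : IsUnit B.det) (hΛ : Λ = B * (Matrix.diagonal r) * B⁻¹) (hΛd : Λ.IsDiag)
    (x : ℝ) : ∏ k, (Λ k k - x) = ∏ k, (r k - x) := by
  have h1 : Λ - x • 1 = B * (Matrix.diagonal r - x • (1 : Matrix (Fin p) (Fin p) ℝ)) * B⁻¹ := by
    have hx : B * (x • (1 : Matrix (Fin p) (Fin p) ℝ)) * B⁻¹ = x • 1 := by
      rw [Matrix.mul_smul, Matrix.mul_one, Matrix.smul_mul, Matrix.mul_nonsing_inv _ hB]
    rw [hΛ, Matrix.mul_sub, Matrix.sub_mul, hx]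
  have hd1 : Λ - x • 1 = Matrix.diagonal (fun k => Λ k k - x) := by
    conv_lhs => rw [← hΛd.diagonal_diag]
    rw [Matrix.smul_one_eq_diagonal, Matrix.diagonal_sub]
    rfl
  have hd2 : Matrix.diagonal r - x • (1 : Matrix (Fin p) (Fin p) ℝ)
      = Matrix.diagonal (fun k => r k - x) := by
    rw [Matrix.smul_one_eq_diagonal, Matrix.diagonal_sub]
  have hdet := congrArg Matrix.det h1
  rw [hd1, hd2, Matrix.det_mul, Matrix.det_mul, Matrix.det_diagonal, Matrix.det_diagonal,
    Matrix.det_nonsing_inv, Ring.inverse_eq_inv'] at hdet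
  have hB0 : B.det ≠ 0 := hB.ne_zero
  field_simp at hdet
  linarith [hdet]

lemma diag_inv_mul {p : ℕ} (D₁ : Matrix (Fin p) (Fin p) ℝ)
    (hD₁ : D₁.IsDiag) (hD₁pos : ∀ i, 0 < D₁ i i) :
    D₁ * Matrix.diagonal (fun i => (D₁ i i)⁻¹) = 1 := by
  ext i j
  rw [Matrix.mul_diagonal]
  by_cases h : i = j
  · subst h
    simp [mul_inv_cancel₀ (hD₁pos i).ne']
  · simp [hD₁ h, Matrix.one_apply_ne h]

lemma key {p : ℕ} (A D₁ D₂ W : Matrix (Fin p) (Fin p) ℝ)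
    (hA : IsUnit A.det)
    (hD₁ : D₁.IsDiag) (hD₁pos : ∀ i, 0 < D₁ i i) (hD₂ : D₂.IsDiag)
    (hr : Function.Injective (fun i => D₂ i i / D₁ i i))
    (hW1 : W * (A * D₁ * Aᵀ) * Wᵀ = 1)
    (hW2 : (W * (A * D₂ * Aᵀ) * Wᵀ).IsDiag) :
    W.det ≠ 0 ∧
      Function.Injective (fun i => (W * (A * D₂ * Aᵀ) * Wᵀ) i i) := by
  have hD₁det : D₁.det ≠ 0 := by
    rw [← hD₁.diagonal_diag, Matrix.det_diagonal]
    exact (Finset.prod_pos (fun i _ => hD₁pos i)).ne'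
  have hWdet : W.det ≠ 0 := by
    have h := congrArg Matrix.det hW1
    rw [Matrix.det_mul, Matrix.det_mul, Matrix.det_mul, Matrix.det_mul,
      Matrix.det_transpose, Matrix.det_transpose, Matrix.det_one] at h
    intro h0
    rw [h0] at h
    simp at h
  refine ⟨hWdet, ?_⟩
  set B := W * A with hB
  have hBdet : IsUnit B.det := by
    rw [hB, Matrix.det_mul]
    exact (isUnit_iff_ne_zero.mpr hWdet).mul hA
  have hB1 : B * D₁ * Bᵀ = 1 := by
    rw [hB]
    simpa [Matrix.transpose_mul, Matrix.mul_assoc] using hW1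
  have e1 : (B * D₁)⁻¹ = Bᵀ := Matrix.inv_eq_right_inv hB1
  have e2 : (B * D₁) * (Matrix.diagonal (fun i => (D₁ i i)⁻¹) * B⁻¹) = 1 := by
    rw [Matrix.mul_assoc B D₁, ← Matrix.mul_assoc D₁, diag_inv_mul D₁ hD₁ hD₁pos,
      Matrix.one_mul, Matrix.mul_nonsing_inv _ hBdet]
  have hBt : Bᵀ = Matrix.diagonal (fun i => (D₁ i i)⁻¹) * B⁻¹ :=
    e1.symm.trans (Matrix.inv_eq_right_inv e2)
  have hM₂eq : W * (A * D₂ * Aᵀ) * Wᵀ = B * D₂ * Bᵀ := by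
    rw [hB]
    simp [Matrix.transpose_mul, Matrix.mul_assoc]
  have hΛsim : W * (A * D₂ * Aᵀ) * Wᵀ
      = B * Matrix.diagonal (fun i => D₂ i i / D₁ i i) * B⁻¹ := by
    rw [hM₂eq, hBt, ← Matrix.mul_assoc]
    congr 1
    rw [Matrix.mul_assoc]
    congr 1
    conv_lhs => rw [← hD₂.diagonal_diag]
    rw [Matrix.diagonal_mul_diagonal]
    simp only [Matrix.diag_apply, div_eq_mul_inv]
  exact inj_of_prod_eq _ _
    (prod_diag_eq_of_sim B _ _ hBdet hΛsim hW2) hr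
end Aux

/-- Uniqueness of the simultaneous diagonalizer up to a signed permutation. -/
theorem simultaneous_diagonalizer_unique {p : ℕ} (hp : 1 ≤ p)
    (A D₁ D₂ W W' : Matrix (Fin p) (Fin p) ℝ)
    (hA : IsUnit A)
    (hD₁ : D₁.IsDiag) (hD₁pos : ∀ i, 0 < D₁ i i)
    (hD₂ : D₂.IsDiag)
    (hdist : ∀ i j, i ≠ j → D₂ i i / D₁ i i ≠ D₂ j j / D₁ j j)
    (hW1 : W * (A * D₁ * Aᵀ) * Wᵀ = 1)
    (hW2 : (W * (A * D₂ * Aᵀ) * Wᵀ).IsDiag)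
    (hW'1 : W' * (A * D₁ * Aᵀ) * W'ᵀ = 1)
    (hW'2 : (W' * (A * D₂ * Aᵀ) * W'ᵀ).IsDiag) :
    ∃ Q : Matrix (Fin p) (Fin p) ℝ, IsSignedPerm Q ∧ W' = Q * W := by
  classical
  have hAdet : IsUnit A.det := (Matrix.isUnit_iff_isUnit_det A).mp hA
  have hrinj : Function.Injective (fun i => D₂ i i / D₁ i i) := by
    intro i j h
    by_contra hne
    exact hdist i j hne h
  obtain ⟨hWdet, hΛinj⟩ := key A D₁ D₂ W hAdet hD₁ hD₁pos hD₂ hrinj hW1 hW2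
  obtain ⟨hW'det, hΛ'inj⟩ := key A D₁ D₂ W' hAdet hD₁ hD₁pos hD₂ hrinj hW'1 hW'2
  have hWu : IsUnit W.det := isUnit_iff_ne_zero.mpr hWdet
  have hWtu : IsUnit Wᵀ.det := by rwa [Matrix.det_transpose, isUnit_iff_ne_zero]
  set Q := W' * W⁻¹ with hQdef
  have hQW : W' = Q * W := by
    rw [hQdef, Matrix.mul_assoc, Matrix.nonsing_inv_mul _ hWu, Matrix.mul_one]
  have hinvW : W⁻¹ = (A * D₁ * Aᵀ) * Wᵀ :=
    Matrix.inv_eq_right_inv (by rw [← Matrix.mul_assoc]; exact hW1)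
  have hM₁ : W⁻¹ * (Wᵀ)⁻¹ = A * D₁ * Aᵀ := by
    rw [hinvW, Matrix.mul_nonsing_inv_cancel_right _ _ hWtu]
  have hQQ : Q * Qᵀ = 1 := by
    rw [hQdef, Matrix.transpose_mul, Matrix.transpose_nonsing_inv]
    calc W' * W⁻¹ * ((Wᵀ)⁻¹ * W'ᵀ) = W' * (W⁻¹ * (Wᵀ)⁻¹) * W'ᵀ := by
          rw [Matrix.mul_assoc, Matrix.mul_assoc, Matrix.mul_assoc]
      _ = 1 := by rw [hM₁]; exact hW'1
  have hQtQ : Qᵀ * Q = 1 := mul_eq_one_comm.mp hQQ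
  set Λ := W * (A * D₂ * Aᵀ) * Wᵀ with hΛdef
  set Λ' := W' * (A * D₂ * Aᵀ) * W'ᵀ with hΛ'def
  have hΛ'eq : Λ' = Q * Λ * Qᵀ := by
    rw [hΛ'def, hΛdef, hQW]
    simp [Matrix.transpose_mul, Matrix.mul_assoc]
  have hcomm : Q * Λ = Λ' * Q := by
    rw [hΛ'eq, Matrix.mul_assoc (Q * Λ), hQtQ, Matrix.mul_one]
  have hentry : ∀ i j, Q i j ≠ 0 → Λ j j = Λ' i i := by
    intro i j hne
    have h := congrFun (congrFun hcomm i) j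
    have h1 : (Q * Λ) i j = Q i j * Λ j j := by
      rw [Matrix.mul_apply]
      exact Finset.sum_eq_single j (fun k _ hk => by rw [hW2 hk, mul_zero]) (by simp)
    have h2 : (Λ' * Q) i j = Λ' i i * Q i j := by
      rw [Matrix.mul_apply]
      exact Finset.sum_eq_single i (fun k _ hk => by rw [hW'2 hk.symm, zero_mul]) (by simp)
    rw [h1, h2] at h
    have h' : Q i j * Λ j j = Q i j * Λ' i i := by rw [h, mul_comm]
    exact mul_left_cancel₀ hne h'
  have hrow : ∀ i, ∑ j, Q i j * Q i j = 1 := by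
    intro i
    have h := congrFun (congrFun hQQ i) i
    rw [Matrix.mul_apply] at h
    simpa [Matrix.transpose_apply, Matrix.one_apply] using h
  have hcol : ∀ j, ∑ i, Q i j * Q i j = 1 := by
    intro j
    have h := congrFun (congrFun hQtQ j) j
    rw [Matrix.mul_apply] at h
    simpa [Matrix.transpose_apply, Matrix.one_apply, mul_comm] using h
  have hrowEU : ∀ i, ∃! j, Q i j ≠ 0 := by
    intro i
    have hex : ∃ j, Q i j ≠ 0 := by
      by_contra h
      push_neg at h
      have := hrow i
      simp [h] at this
    obtain ⟨j0, hj0⟩ := hex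
    refine ⟨j0, hj0, fun j' hj' => ?_⟩
    exact hΛinj ((hentry i j' hj').trans (hentry i j0 hj0).symm)
  have hcolEU : ∀ j, ∃! i, Q i j ≠ 0 := by
    intro j
    have hex : ∃ i, Q i j ≠ 0 := by
      by_contra h
      push_neg at h
      have := hcol j
      simp [h] at this
    obtain ⟨i0, hi0⟩ := hex
    refine ⟨i0, hi0, fun i' hi' => ?_⟩
    exact hΛ'inj ((hentry i' j hi').symm.trans (hentry i0 j hi0))
  refine ⟨Q, ⟨hrowEU, hcolEU, ?_⟩, hQW⟩
  intro i j hne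
  have hzero : ∀ k, k ≠ j → Q i k * Q i k = 0 := by
    intro k hk
    have : Q i k = 0 := by
      by_contra hk0
      exact hk ((hrowEU i).unique hk0 hne)
    rw [this, mul_zero]
  have hsum := hrow i
  rw [Finset.sum_eq_single j (fun k _ hk => hzero k hk) (by simp)] at hsum
  exact mul_self_eq_one_iff.mp hsum
end
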